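/- In the setting of the Dirac current on a Clifford module W over Cl(n,1): writing V_φ = u_φ e₀ − U_φ with U_φ ∈ ℝⁿ, one has u_φ = |φ|² for every φ ∈ W. In particular V_φ = 0 if and only if φ = 0, and if φ ≠ 0 then V_φ is future-causal (⟨V_φ,V_φ⟩_{Mink} ≤ 0 and u_φ > 0). -/

import Mathlib

open scoped RealInnerProductSpace

/-- The Minkowski bilinear form of signature (n,1) on ℝ^{n,1} = ℝⁿ ⊕ ℝe₀. -/
noncomputable def mink {n : ℕ} (v w : EuclideanSpace ℝ (Fin n) × ℝ) : ℝ :=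
  ⟪v.1, w.1⟫ - v.2 * w.2

/-- The future unit timelike vector e₀. -/
noncomputable def e0 (n : ℕ) : EuclideanSpace ℝ (Fin n) × ℝ := (0, 1)

/-!
Pairing the defining identity of `V_φ` with `e₀` and using `e₀·e₀ = 1` gives `u_φ = |φ|²`.
Pairing it with a spatial vector `x` gives `⟨U_φ, x⟩ = -⟨e₀·x·φ, φ⟩`; since `e₀·` is an isometry
and `x·` scales norms by `|x|`, Cauchy–Schwarz yields `|U_φ| ≤ |φ|² = u_φ`, which is causality.
-/

section Operators

variable {W : Type*} [NormedAddCommGroup W] [InnerProductSpace ℝ W]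

theorem norm_apply_eq_of_symm_of_involutive {T : W → W} (hT : ∀ ψ χ, ⟪T ψ, χ⟫ = ⟪ψ, T χ⟫)
    (hTT : ∀ ψ, T (T ψ) = ψ) (ψ : W) : ‖T ψ‖ = ‖ψ‖ := by
  have h : ‖T ψ‖ ^ 2 = ‖ψ‖ ^ 2 := by
    rw [← real_inner_self_eq_norm_sq, ← real_inner_self_eq_norm_sq, hT, hTT]
  exact (sq_eq_sq₀ (norm_nonneg _) (norm_nonneg _)).mp h

theorem norm_apply_eq_of_skew_of_sq_eq_neg_smul {T : W → W} {a : ℝ}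
    (hT : ∀ ψ χ, ⟪T ψ, χ⟫ = -⟪ψ, T χ⟫) (hTT : ∀ ψ, T (T ψ) = -(a ^ 2) • ψ) (ha : 0 ≤ a)
    (ψ : W) : ‖T ψ‖ = a * ‖ψ‖ := by
  have h : ‖T ψ‖ ^ 2 = (a * ‖ψ‖) ^ 2 := by
    rw [← real_inner_self_eq_norm_sq, hT, hTT, inner_smul_right, real_inner_self_eq_norm_sq]
    ring
  exact (sq_eq_sq₀ (norm_nonneg _) (mul_nonneg ha (norm_nonneg _))).mp h

end Operators

section Minkowski

variable {n : ℕ}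

theorem mink_self (v : EuclideanSpace ℝ (Fin n) × ℝ) : mink v v = ‖v.1‖ ^ 2 - v.2 ^ 2 := by
  rw [mink, real_inner_self_eq_norm_sq]
  ring

theorem mink_e0_right (v : EuclideanSpace ℝ (Fin n) × ℝ) : mink v (e0 n) = -v.2 := by
  simp [mink, e0]

theorem mink_spatial_right (v : EuclideanSpace ℝ (Fin n) × ℝ) (x : EuclideanSpace ℝ (Fin n)) :
    mink v (x, 0) = ⟪v.1, x⟫ := by
  simp [mink]

theorem mink_e0_e0 : mink (e0 n) (e0 n) = -1 := by
  simp [mink, e0]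

theorem mink_spatial_spatial (x : EuclideanSpace ℝ (Fin n)) : mink (x, 0) (x, 0) = ‖x‖ ^ 2 := by
  simp [mink_self]

end Minkowski

section DiracCurrent

variable {n : ℕ} {W : Type*} [NormedAddCommGroup W] [InnerProductSpace ℝ W]
  {cm : (EuclideanSpace ℝ (Fin n) × ℝ) →ₗ[ℝ] Module.End ℝ W}

theorem cm_e0_cm_e0 (hcl : ∀ v (ψ : W), cm v (cm v ψ) = -(mink v v) • ψ) (ψ : W) :
    cm (e0 n) (cm (e0 n) ψ) = ψ := by
  rw [hcl, mink_e0_e0, neg_neg, one_smul]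

theorem time_component_eq_norm_sq (hcl : ∀ v (ψ : W), cm v (cm v ψ) = -(mink v v) • ψ)
    {φ : W} {V : EuclideanSpace ℝ (Fin n) × ℝ}
    (hV : ∀ X, mink V X = -⟪cm (e0 n) (cm X φ), φ⟫) : V.2 = ‖φ‖ ^ 2 := by
  have h := hV (e0 n)
  rw [mink_e0_right, cm_e0_cm_e0 hcl, real_inner_self_eq_norm_sq] at h
  linarith

theorem norm_spatial_le_norm_sq (hcl : ∀ v (ψ : W), cm v (cm v ψ) = -(mink v v) • ψ)
    (he0 : ∀ ψ χ : W, ⟪cm (e0 n) ψ, χ⟫ = ⟪ψ, cm (e0 n) χ⟫)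
    (hsp : ∀ (x : EuclideanSpace ℝ (Fin n)) (ψ χ : W),
      ⟪cm (x, (0:ℝ)) ψ, χ⟫ = -⟪ψ, cm (x, (0:ℝ)) χ⟫)
    {φ : W} {V : EuclideanSpace ℝ (Fin n) × ℝ}
    (hV : ∀ X, mink V X = -⟪cm (e0 n) (cm X φ), φ⟫) : ‖V.1‖ ≤ ‖φ‖ ^ 2 := by
  have norm_cm_spatial : ‖cm (V.1, 0) φ‖ = ‖V.1‖ * ‖φ‖ :=
    norm_apply_eq_of_skew_of_sq_eq_neg_smul (hsp V.1)
      (fun ψ ↦ by rw [hcl, mink_spatial_spatial]) (norm_nonneg _) φ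
  have norm_cm_e0 : ‖cm (e0 n) (cm (V.1, 0) φ)‖ = ‖cm (V.1, 0) φ‖ :=
    norm_apply_eq_of_symm_of_involutive he0 (cm_e0_cm_e0 hcl) _
  have h : ‖V.1‖ * ‖V.1‖ ≤ ‖V.1‖ * ‖φ‖ ^ 2 :=
    calc ‖V.1‖ * ‖V.1‖ = ⟪V.1, V.1⟫ := (real_inner_self_eq_norm_mul_norm _).symm
      _ = -⟪cm (e0 n) (cm (V.1, 0) φ), φ⟫ := by rw [← mink_spatial_right, hV]
      _ ≤ ‖cm (e0 n) (cm (V.1, 0) φ)‖ * ‖φ‖ := (neg_le_abs _).trans (abs_real_inner_le_norm _ _)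
      _ = ‖V.1‖ * ‖φ‖ ^ 2 := by rw [norm_cm_e0, norm_cm_spatial]; ring
  rcases (norm_nonneg V.1).eq_or_lt with h0 | hpos
  · rw [← h0]; positivity
  · exact le_of_mul_le_mul_left h hpos

end DiracCurrent

/-- writing V_φ = u_φ e₀ − U_φ (so that u_φ = (V_φ).2), one has
u_φ = |φ|²; moreover V_φ = 0 iff φ = 0, and for φ ≠ 0 the Dirac current is
future-causal: ⟨V_φ,V_φ⟩ ≤ 0 and u_φ > 0. -/
theorem dirac_current_time_component (n : ℕ) (W : Type*) [NormedAddCommGroup W]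
    [InnerProductSpace ℝ W]
    (cm : (EuclideanSpace ℝ (Fin n) × ℝ) →ₗ[ℝ] Module.End ℝ W)
    (hcl : ∀ v (ψ : W), cm v (cm v ψ) = -(mink v v) • ψ)
    (he0 : ∀ ψ χ : W, ⟪cm (e0 n) ψ, χ⟫ = ⟪ψ, cm (e0 n) χ⟫)
    (hsp : ∀ (x : EuclideanSpace ℝ (Fin n)) (ψ χ : W),
      ⟪cm (x, (0:ℝ)) ψ, χ⟫ = -⟪ψ, cm (x, (0:ℝ)) χ⟫)
    (φ : W) (Vφ : EuclideanSpace ℝ (Fin n) × ℝ)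
    (hV : ∀ X, mink Vφ X = -⟪cm (e0 n) (cm X φ), φ⟫) :
    Vφ.2 = ‖φ‖ ^ 2 ∧ (Vφ = 0 ↔ φ = 0) ∧
      (φ ≠ 0 → mink Vφ Vφ ≤ 0 ∧ 0 < Vφ.2) := by
  have hu := time_component_eq_norm_sq hcl hV
  have hU := norm_spatial_le_norm_sq hcl he0 hsp hV
  refine ⟨hu, ⟨fun h0 ↦ ?_, fun h0 ↦ ?_⟩, fun hφ ↦ ⟨?_, ?_⟩⟩
  · have : ‖φ‖ ^ 2 = 0 := by rw [← hu, h0, Prod.snd_zero]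
    simpa using this
  · subst h0
    exact Prod.ext (norm_le_zero_iff.mp (by simpa using hU)) (by simpa using hu)
  · rw [mink_self, sub_nonpos, hu]
    exact pow_le_pow_left₀ (norm_nonneg _) hU 2
  · rw [hu]
    exact pow_pos (norm_pos_iff.mpr hφ) 2
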